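/- Under the hypotheses H1 and H2' below, the ladder (running maximum from the right) converges in finite-dimensional distribution: for every t ∈ [0,1] with μ({t}) = 0 and every x > 0, P( max_{nt < j ≤ n} X_{n,j} ≤ x ) = ∏_{nt < j ≤ n} P_{n,j}((0,x]) → exp( − μ((t,1]) · γ([x,∞)) ) as n → ∞. -/

import Mathlib

/-!
By independence, the probability that the ladder stays below `x` is `∏_{nt < j ≤ n} (1 - p_{n,j})`
with `p_{n,j} = P_{n,j}([x,∞))`. By H2', `p_{n,j} = (c_{n,j}/d_n) (γ([x,∞)) + o(1))` uniformly
in `j`, so the `p_{n,j}` are uniformly small by H1 and `∑_{j > nt} p_{n,j}` is asymptotic to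
`γ([x,∞)) μ_n((t,∞))`, which tends to `γ([x,∞)) μ((t,1])` by the portmanteau theorem because
`μ{t} = 0`. Finally `log (1 - p) = -p + O(p²)` turns the product into the exponential of the sum.
-/

open MeasureTheory Filter Set Topology ProbabilityTheory
open scoped BoundedContinuousFunction

lemma ProbabilityTheory.iIndepFun.measure_forall_imp_le_eq_prod {Ω ι : Type*}
    [MeasurableSpace Ω] {Pr : Measure Ω} {s : Finset ι} {X : ι → Ω → ℝ}
    (hX : iIndepFun (fun j : s => X j) Pr) (q : ι → Prop) [DecidablePred q] (x : ℝ) :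
    Pr {ω | ∀ j ∈ s, q j → X j ω ≤ x} = ∏ j ∈ s with q j, Pr (X j ⁻¹' Iic x) := by
  have := hX.isProbabilityMeasure
  have hset : {ω | ∀ j ∈ s, q j → X j ω ≤ x}
      = ⋂ j ∈ (Finset.univ : Finset s), (fun j : s => X j) j ⁻¹' {y | q j → y ≤ x} := by
    ext ω; simp
  rw [hset, hX.measure_inter_preimage_eq_mul _ fun j _ => ?meas, Finset.prod_coe_sort s
    (fun j => Pr (X j ⁻¹' {y | q j → y ≤ x})), Finset.prod_filter]
  case meas =>
    by_cases hq : q j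
    · simp only [hq, forall_const]
      exact measurableSet_Iic
    · simp [hq]
  refine Finset.prod_congr rfl fun j _ => ?_
  by_cases hq : q j <;> simp [hq, Iic]

lemma measure_Ioc_eq_measure_Iic {P : Measure ℝ} {a : ℝ} (ha : P (Iic a) = 0) (x : ℝ) :
    P (Ioc a x) = P (Iic x) := by
  rw [← Ioi_inter_Iic, Set.inter_comm, measure_inter_conull (by rwa [compl_Ioi])]

lemma measureReal_Ioc_eq_one_sub {P : Measure ℝ} [IsProbabilityMeasure P] {a x : ℝ}
    (ha : P (Iic a) = 0) (hx : P {x} = 0) : P.real (Ioc a x) = 1 - P.real (Ici x) := by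
  rw [measureReal_def, measure_Ioc_eq_measure_Iic ha, ← measureReal_def, ← compl_Ioi,
    probReal_compl_eq_one_sub measurableSet_Ioi, measureReal_congr (Ioi_ae_eq_Ici' hx)]

lemma abs_log_one_sub_add_le {p : ℝ} (h0 : 0 ≤ p) (h1 : p ≤ 1 / 2) :
    |Real.log (1 - p) + p| ≤ 2 * p ^ 2 := by
  have h := Real.abs_log_sub_add_sum_range_le (x := p) (by rw [abs_of_nonneg h0]; linarith) 1
  rw [abs_of_nonneg h0] at h
  rw [add_comm]
  calc |p + Real.log (1 - p)| ≤ p ^ 2 / (1 - p) := by simpa using h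
    _ ≤ 2 * p ^ 2 := by rw [div_le_iff₀ (by linarith)]; nlinarith

section TriangularArrays

variable {ι κ : Type*} {l : Filter ι} {F : ι → Finset κ}

theorem tendsto_prod_one_sub_of_tendsto_sum {p : ι → κ → ℝ} {L : ℝ}
    (hp : ∀ i, ∀ j ∈ F i, 0 ≤ p i j) (hsmall : ∀ ε > 0, ∀ᶠ i in l, ∀ j ∈ F i, p i j ≤ ε)
    (hsum : Tendsto (fun i => ∑ j ∈ F i, p i j) l (𝓝 L)) :
    Tendsto (fun i => ∏ j ∈ F i, (1 - p i j)) l (𝓝 (Real.exp (-L))) := by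
  have herr : Tendsto (fun i => ∑ j ∈ F i, (Real.log (1 - p i j) + p i j)) l (𝓝 0) := by
    rw [Metric.tendsto_nhds]
    intro ε hε
    set η := min (1 / 2) (ε / (2 * (|L| + 2)))
    have hη : 0 < η := by positivity
    filter_upwards [hsmall η hη, hsum.eventually_lt_const (lt_add_one L)] with i hpi hSi
    have hS0 : 0 ≤ ∑ j ∈ F i, p i j := Finset.sum_nonneg (hp i)
    rw [Real.dist_0_eq_abs]
    calc |∑ j ∈ F i, (Real.log (1 - p i j) + p i j)|
        ≤ ∑ j ∈ F i, |Real.log (1 - p i j) + p i j| := Finset.abs_sum_le_sum_abs _ _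
      _ ≤ ∑ j ∈ F i, 2 * η * p i j := Finset.sum_le_sum fun j hj => by
          have := abs_log_one_sub_add_le (hp i j hj) ((hpi j hj).trans (min_le_left _ _))
          nlinarith [hp i j hj, hpi j hj]
      _ = 2 * η * ∑ j ∈ F i, p i j := (Finset.mul_sum _ _ _).symm
      _ ≤ 2 * (ε / (2 * (|L| + 2))) * (|L| + 1) := by
          gcongr
          · exact min_le_right _ _
          · linarith [le_abs_self L]
      _ < ε := by
          rw [show 2 * (ε / (2 * (|L| + 2))) * (|L| + 1) = ε * ((|L| + 1) / (|L| + 2)) by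
            field_simp]
          exact mul_lt_of_lt_one_right hε ((div_lt_one (by positivity)).2 (by linarith))
  have hlog : Tendsto (fun i => ∑ j ∈ F i, Real.log (1 - p i j)) l (𝓝 (-L)) := by
    simpa [Finset.sum_add_distrib] using herr.sub hsum
  refine ((Real.continuous_exp.tendsto _).comp hlog).congr' ?_
  filter_upwards [hsmall (1 / 2) (by norm_num)] with i hi
  rw [Function.comp_apply, Real.exp_sum]
  exact Finset.prod_congr rfl fun j hj => Real.exp_log (by linarith [hi j hj])

theorem tendsto_sum_of_tendsto_uniformly_div {a q : ι → κ → ℝ} {A g : ℝ}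
    (ha : ∀ i, ∀ j ∈ F i, 0 < a i j)
    (hratio : ∀ ε > 0, ∀ᶠ i in l, ∀ j ∈ F i, |q i j / a i j - g| < ε)
    (hsum : Tendsto (fun i => ∑ j ∈ F i, a i j) l (𝓝 A)) :
    Tendsto (fun i => ∑ j ∈ F i, q i j) l (𝓝 (A * g)) := by
  have herr : Tendsto (fun i => ∑ j ∈ F i, (q i j - a i j * g)) l (𝓝 0) := by
    rw [Metric.tendsto_nhds]
    intro ε hε
    have hη : 0 < ε / (|A| + 2) := by positivity
    filter_upwards [hratio _ hη, hsum.eventually_lt_const (lt_add_one A)] with i hqi hSi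
    rw [Real.dist_0_eq_abs]
    calc |∑ j ∈ F i, (q i j - a i j * g)|
        ≤ ∑ j ∈ F i, |q i j - a i j * g| := Finset.abs_sum_le_sum_abs _ _
      _ ≤ ∑ j ∈ F i, ε / (|A| + 2) * a i j := Finset.sum_le_sum fun j hj => by
          have hpos := ha i j hj
          rw [show q i j - a i j * g = a i j * (q i j / a i j - g) by field_simp, abs_mul,
            abs_of_pos hpos, mul_comm]
          exact mul_le_mul_of_nonneg_right (hqi j hj).le hpos.le
      _ = ε / (|A| + 2) * ∑ j ∈ F i, a i j := (Finset.mul_sum _ _ _).symm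
      _ ≤ ε / (|A| + 2) * (|A| + 1) := by gcongr; linarith [le_abs_self A]
      _ < ε := by
          rw [div_mul_eq_mul_div, div_lt_iff₀ (by positivity)]
          nlinarith [abs_nonneg A]
  simpa [Finset.sum_sub_distrib, Finset.sum_mul] using herr.add (hsum.mul_const g)

theorem eventually_le_of_tendsto_uniformly_div {a q : ι → κ → ℝ} {g : ℝ}
    (ha : ∀ i, ∀ j ∈ F i, 0 < a i j)
    (hratio : ∀ ε > 0, ∀ᶠ i in l, ∀ j ∈ F i, |q i j / a i j - g| < ε)
    (hsmall : ∀ ε > 0, ∀ᶠ i in l, ∀ j ∈ F i, a i j ≤ ε) :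
    ∀ ε > 0, ∀ᶠ i in l, ∀ j ∈ F i, q i j ≤ ε := by
  intro ε hε
  filter_upwards [hratio 1 one_pos, hsmall (ε / (|g| + 1)) (by positivity)] with i hqi hai j hj
  have hpos := ha i j hj
  have hq : q i j / a i j ≤ |g| + 1 := by linarith [(abs_lt.1 (hqi j hj)).2, le_abs_self g]
  calc q i j ≤ (|g| + 1) * a i j := (div_le_iff₀ hpos).1 hq
    _ ≤ (|g| + 1) * (ε / (|g| + 1)) := by gcongr; exact hai j hj
    _ = ε := by field_simp

end TriangularArrays

section Portmanteau

variable {Ω ι : Type*} [MeasurableSpace Ω] {l : Filter ι} {μs : ι → Measure Ω} {μ : Measure Ω}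

lemma isProbabilityMeasure_of_tendsto_integral_one [l.NeBot] [∀ i, IsProbabilityMeasure (μs i)]
    (h : Tendsto (fun i => ∫ _, (1 : ℝ) ∂μs i) l (𝓝 (∫ _, (1 : ℝ) ∂μ))) :
    IsProbabilityMeasure μ := by
  simp only [integral_const, probReal_univ, smul_eq_mul, mul_one] at h
  have h1 : μ.real univ = 1 := tendsto_nhds_unique h tendsto_const_nhds
  exact ⟨(ENNReal.toReal_eq_one_iff _).1 h1⟩

theorem tendsto_measure_of_null_frontier_of_forall_integral_tendsto [TopologicalSpace Ω]
    [OpensMeasurableSpace Ω] [HasOuterApproxClosed Ω] [∀ i, IsProbabilityMeasure (μs i)]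
    [IsProbabilityMeasure μ]
    (h : ∀ f : Ω →ᵇ ℝ, Tendsto (fun i => ∫ ω, f ω ∂μs i) l (𝓝 (∫ ω, f ω ∂μ)))
    {E : Set Ω} (hE : μ (frontier E) = 0) : Tendsto (fun i => μs i E) l (𝓝 (μ E)) :=
  ProbabilityMeasure.tendsto_measure_of_null_frontier_of_tendsto'
    (μs := fun i => ⟨μs i, inferInstance⟩) (μ := ⟨μ, inferInstance⟩)
    (ProbabilityMeasure.tendsto_iff_forall_integral_tendsto.2 h) hE

end Portmanteau

section WeightedDirac

variable {α κ : Type*} [MeasurableSpace α] {s : Finset κ} {w : κ → ℝ} {z : κ → α}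

noncomputable def weightedDirac (s : Finset κ) (w : κ → ℝ) (z : κ → α) : Measure α :=
  ∑ j ∈ s, ENNReal.ofReal (w j) • Measure.dirac (z j)

open Classical in
lemma weightedDirac_apply {A : Set α} (hA : MeasurableSet A) :
    weightedDirac s w z A = ∑ j ∈ s with z j ∈ A, ENNReal.ofReal (w j) := by
  simp [weightedDirac, Measure.dirac_apply' _ hA, Finset.sum_filter, indicator]

open Classical in
lemma weightedDirac_real_apply (hw : ∀ j ∈ s, 0 ≤ w j) {A : Set α} (hA : MeasurableSet A) :
    (weightedDirac s w z).real A = ∑ j ∈ s with z j ∈ A, w j := by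
  rw [measureReal_def, weightedDirac_apply hA, ENNReal.toReal_sum (by simp)]
  exact Finset.sum_congr rfl fun j hj => ENNReal.toReal_ofReal (hw j (Finset.mem_filter.1 hj).1)

lemma isProbabilityMeasure_weightedDirac (hw : ∀ j ∈ s, 0 ≤ w j) (h1 : ∑ j ∈ s, w j = 1) :
    IsProbabilityMeasure (weightedDirac s w z) :=
  ⟨by rw [weightedDirac_apply MeasurableSet.univ]; simp [← ENNReal.ofReal_sum_of_nonneg hw, h1]⟩

end WeightedDirac

theorem tendsto_sum_filter_lt_of_forall_integral_tendsto {w : ℕ → ℕ → ℝ}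
    (hw0 : ∀ n, ∀ j ∈ Finset.Icc 1 n, 0 ≤ w n j)
    (hw1 : ∀ n, 1 ≤ n → ∑ j ∈ Finset.Icc 1 n, w n j = 1) {μ : Measure ℝ}
    (hμ : μ (Icc 0 1)ᶜ = 0)
    (hweak : ∀ f : ℝ → ℝ, Continuous f → (∃ C, ∀ x, |f x| ≤ C) →
      Tendsto (fun n => ∫ x, f x ∂(weightedDirac (Finset.Icc 1 n) (w n) fun j => (j : ℝ) / n))
        atTop (𝓝 (∫ x, f x ∂μ)))
    {t : ℝ} (ht : μ {t} = 0) :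
    Tendsto (fun n : ℕ => ∑ j ∈ (Finset.Icc 1 n).filter (fun j : ℕ => (n : ℝ) * t < (j : ℝ)),
      w n j) atTop (𝓝 (μ (Ioc t 1)).toReal) := by
  -- shifted by one: the `n = 0` term is the zero measure, not a probability measure
  set ν : ℕ → Measure ℝ := fun n =>
    weightedDirac (Finset.Icc 1 (n + 1)) (w (n + 1)) fun j => (j : ℝ) / (n + 1 : ℕ)
  have hν (n : ℕ) : IsProbabilityMeasure (ν n) :=
    isProbabilityMeasure_weightedDirac (hw0 _) (hw1 _ n.succ_pos)
  have hlim (f : ℝ →ᵇ ℝ) : Tendsto (fun n => ∫ x, f x ∂ν n) atTop (𝓝 (∫ x, f x ∂μ)) :=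
    (hweak f f.continuous ⟨‖f‖, f.norm_coe_le_norm⟩).comp (tendsto_add_atTop_nat 1)
  have : IsProbabilityMeasure μ := isProbabilityMeasure_of_tendsto_integral_one (hlim 1)
  have hIoi := tendsto_measure_of_null_frontier_of_forall_integral_tendsto hlim (E := Ioi t)
    (by rwa [frontier_Ioi])
  have hIoc : μ (Ioc t 1) = μ (Ioi t) :=
    measure_inter_conull (measure_mono_null (compl_subset_compl.2 Icc_subset_Iic_self) hμ)
  rw [← tendsto_add_atTop_iff_nat 1, hIoc]
  refine ((ENNReal.tendsto_toReal (measure_ne_top μ _)).comp hIoi).congr fun n => ?_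
  rw [Function.comp_apply, ← measureReal_def, weightedDirac_real_apply (hw0 _) measurableSet_Ioi]
  refine Finset.sum_congr (Finset.filter_congr fun j _ => ?_) fun _ _ => rfl
  rw [mem_Ioi, lt_div_iff₀ (by positivity), mul_comm]

theorem ladder_converges_in_fdd_general
    (Ω : Type*) [MeasurableSpace Ω] (Pr : Measure Ω)
    (X : ℕ → ℕ → Ω → ℝ)
    (hXmeas : ∀ n j, 1 ≤ j → j ≤ n → Measurable (X n j))
    -- for each `n`, the variables `X n 1, …, X n n` are independent
    (hindep : ∀ n, ProbabilityTheory.iIndepFun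
      (m := fun _ : ↥(Finset.Icc 1 n) => (inferInstance : MeasurableSpace ℝ))
      (fun j : ↥(Finset.Icc 1 n) => X n j) Pr)
    -- `P n j` is the (nonatomic, supported on `(0,∞)`) distribution of `X n j`
    (P : ℕ → ℕ → Measure ℝ)
    (hPdist : ∀ n j, 1 ≤ j → j ≤ n → Measure.map (X n j) Pr = P n j)
    (hPprob : ∀ n j, 1 ≤ j → j ≤ n → IsProbabilityMeasure (P n j))
    (hPpos : ∀ n j, 1 ≤ j → j ≤ n → P n j (Set.Iic 0) = 0)
    (hPna : ∀ n j, 1 ≤ j → j ≤ n → ∀ x : ℝ, P n j {x} = 0)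
    (c : ℕ → ℕ → ℝ) (d : ℕ → ℝ)
    (hc : ∀ n j, 1 ≤ j → j ≤ n → 0 < c n j)
    (hd : ∀ n, d n = ∑ j ∈ Finset.Icc 1 n, c n j)
    -- H1 : `d n → ∞` and `(max_{j ≤ n} c n j) / d n → 0`
    (hmax : ∀ ε : ℝ, 0 < ε → ∃ N, ∀ n ≥ N, ∀ j ∈ Finset.Icc 1 n, c n j / d n < ε)
    -- H1 : the measures `μ_n = ∑_j (c n j / d n) δ_{j/n}` converge weakly to `μ`
    (μ : Measure ℝ)
    (hμsupp : μ ((Set.Icc (0:ℝ) 1)ᶜ) = 0)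
    (hweak : ∀ f : ℝ → ℝ, Continuous f → (∃ C, ∀ x, |f x| ≤ C) →
      Tendsto (fun n => ∫ x, f x ∂(∑ j ∈ Finset.Icc 1 n,
          ENNReal.ofReal (c n j / d n) • Measure.dirac ((j : ℝ) / (n : ℝ))))
        atTop (nhds (∫ x, f x ∂μ)))
    -- H2' : `γ` nonatomic, finite on half-lines, uniform convergence of scaled tails
    (γ : Measure ℝ)
    (hunif : ∀ t : ℝ, 0 < t → ∀ ε : ℝ, 0 < ε → ∃ N, ∀ n ≥ N, ∀ j ∈ Finset.Icc 1 n,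
      |d n / c n j * (P n j (Set.Ici t)).toReal - (γ (Set.Ici t)).toReal| < ε) :
    ∀ t ∈ Set.Icc (0:ℝ) 1, μ {t} = 0 → ∀ x : ℝ, 0 < x →
      (∀ n : ℕ, (Pr {ω | ∀ j ∈ Finset.Icc 1 n, (n : ℝ) * t < (j : ℝ) → X n j ω ≤ x}).toReal
        = ∏ j ∈ (Finset.Icc 1 n).filter (fun j : ℕ => (n : ℝ) * t < (j : ℝ)),
            (P n j (Set.Ioc 0 x)).toReal) ∧
      Tendsto (fun n : ℕ => ∏ j ∈ (Finset.Icc 1 n).filter (fun j : ℕ => (n : ℝ) * t < (j : ℝ)),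
          (P n j (Set.Ioc 0 x)).toReal)
        atTop (nhds (Real.exp (-((μ (Set.Ioc t 1)).toReal * (γ (Set.Ici x)).toReal)))) := by
  intro t _ hμt x hx
  have hd_pos (n : ℕ) (hn : 1 ≤ n) : 0 < d n := hd n ▸ Finset.sum_pos
    (fun j hj => hc n j (Finset.mem_Icc.1 hj).1 (Finset.mem_Icc.1 hj).2) ⟨1, by simpa using hn⟩
  have hw (n : ℕ) (j : ℕ) (hj : j ∈ Finset.Icc 1 n) : 0 < c n j / d n := by
    obtain ⟨h1, h2⟩ := Finset.mem_Icc.1 hj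
    exact div_pos (hc n j h1 h2) (hd_pos n (h1.trans h2))
  refine ⟨fun n => ?_, ?_⟩
  · rw [(hindep n).measure_forall_imp_le_eq_prod, ENNReal.toReal_prod]
    refine Finset.prod_congr rfl fun j hj => ?_
    obtain ⟨h1, h2⟩ := Finset.mem_Icc.1 (Finset.mem_filter.1 hj).1
    rw [← Measure.map_apply (hXmeas n j h1 h2) measurableSet_Iic, hPdist n j h1 h2,
      measure_Ioc_eq_measure_Iic (hPpos n j h1 h2)]
  set F := fun n : ℕ => (Finset.Icc 1 n).filter (fun j : ℕ => (n : ℝ) * t < (j : ℝ))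
  have hwF (n : ℕ) (j : ℕ) (hj : j ∈ F n) : 0 < c n j / d n := hw n j (Finset.mem_filter.1 hj).1
  have hratio : ∀ ε > 0, ∀ᶠ n in atTop, ∀ j ∈ F n,
      |(P n j (Ici x)).toReal / (c n j / d n) - (γ (Ici x)).toReal| < ε := fun ε hε => by
    obtain ⟨N, hN⟩ := hunif x hx ε hε
    filter_upwards [eventually_ge_atTop N] with n hn j hj
    convert hN n hn j (Finset.mem_filter.1 hj).1 using 3
    rw [div_div_eq_mul_div]
    ring
  have hsmall : ∀ ε > 0, ∀ᶠ n in atTop, ∀ j ∈ F n, c n j / d n ≤ ε := fun ε hε => by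
    obtain ⟨N, hN⟩ := hmax ε hε
    filter_upwards [eventually_ge_atTop N] with n hn j hj
    exact (hN n hn j (Finset.mem_filter.1 hj).1).le
  have hsum := tendsto_sum_filter_lt_of_forall_integral_tendsto (fun n j hj => (hw n j hj).le)
    (fun n hn => by rw [← Finset.sum_div, ← hd, div_self (hd_pos n hn).ne']) hμsupp hweak hμt
  refine (tendsto_prod_one_sub_of_tendsto_sum (fun n j _ => ENNReal.toReal_nonneg)
    (eventually_le_of_tendsto_uniformly_div hwF hratio hsmall)
    (tendsto_sum_of_tendsto_uniformly_div hwF hratio hsum)).congr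
    fun n => Finset.prod_congr rfl fun j hj => ?_
  obtain ⟨h1, h2⟩ := Finset.mem_Icc.1 (Finset.mem_filter.1 hj).1
  have := hPprob n j h1 h2
  exact (measureReal_Ioc_eq_one_sub (hPpos n j h1 h2) (hPna n j h1 h2 x)).symm

/-- Under hypotheses H1 and H2', the ladder (running maximum from the right)
converges in finite-dimensional distribution: for every `t ∈ [0,1]` with
`μ({t}) = 0` and every `x > 0`,
`P(max_{nt < j ≤ n} X_{n,j} ≤ x) = ∏_{nt < j ≤ n} P_{n,j}((0,x]) → exp(-μ((t,1])·γ([x,∞)))`. -/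
theorem ladder_converges_in_fdd
    (Ω : Type*) [MeasurableSpace Ω] (Pr : Measure Ω) [IsProbabilityMeasure Pr]
    (X : ℕ → ℕ → Ω → ℝ)
    (hXmeas : ∀ n j, 1 ≤ j → j ≤ n → Measurable (X n j))
    (hXpos : ∀ n j, 1 ≤ j → j ≤ n → ∀ ω, 0 < X n j ω)
    -- for each `n`, the variables `X n 1, …, X n n` are independent
    (hindep : ∀ n, ProbabilityTheory.iIndepFun
      (m := fun _ : ↥(Finset.Icc 1 n) => (inferInstance : MeasurableSpace ℝ))
      (fun j : ↥(Finset.Icc 1 n) => X n j) Pr)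
    -- `P n j` is the (nonatomic, supported on `(0,∞)`) distribution of `X n j`
    (P : ℕ → ℕ → Measure ℝ)
    (hPdist : ∀ n j, 1 ≤ j → j ≤ n → Measure.map (X n j) Pr = P n j)
    (hPprob : ∀ n j, 1 ≤ j → j ≤ n → IsProbabilityMeasure (P n j))
    (hPpos : ∀ n j, 1 ≤ j → j ≤ n → P n j (Set.Iic 0) = 0)
    (hPna : ∀ n j, 1 ≤ j → j ≤ n → ∀ x : ℝ, P n j {x} = 0)
    (c : ℕ → ℕ → ℝ) (d : ℕ → ℝ)
    (hc : ∀ n j, 1 ≤ j → j ≤ n → 0 < c n j)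
    (hd : ∀ n, d n = ∑ j ∈ Finset.Icc 1 n, c n j)
    -- H1 : `d n → ∞` and `(max_{j ≤ n} c n j) / d n → 0`
    (hdtop : Tendsto d atTop atTop)
    (hmax : ∀ ε : ℝ, 0 < ε → ∃ N, ∀ n ≥ N, ∀ j ∈ Finset.Icc 1 n, c n j / d n < ε)
    -- H1 : the measures `μ_n = ∑_j (c n j / d n) δ_{j/n}` converge weakly to `μ`
    (μ : Measure ℝ)
    (hμsupp : μ ((Set.Icc (0:ℝ) 1)ᶜ) = 0)
    (hweak : ∀ f : ℝ → ℝ, Continuous f → (∃ C, ∀ x, |f x| ≤ C) →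
      Tendsto (fun n => ∫ x, f x ∂(∑ j ∈ Finset.Icc 1 n,
          ENNReal.ofReal (c n j / d n) • Measure.dirac ((j : ℝ) / (n : ℝ))))
        atTop (nhds (∫ x, f x ∂μ)))
    -- H2' : `γ` nonatomic, finite on half-lines, uniform convergence of scaled tails
    (γ : Measure ℝ)
    (hγ0 : γ (Set.Iic 0) = 0)
    (hγna : ∀ x : ℝ, 0 < x → γ {x} = 0)
    (hγfin : ∀ t : ℝ, 0 < t → γ (Set.Ici t) ≠ ⊤)
    (hunif : ∀ t : ℝ, 0 < t → ∀ ε : ℝ, 0 < ε → ∃ N, ∀ n ≥ N, ∀ j ∈ Finset.Icc 1 n,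
      |d n / c n j * (P n j (Set.Ici t)).toReal - (γ (Set.Ici t)).toReal| < ε) :
    ∀ t ∈ Set.Icc (0:ℝ) 1, μ {t} = 0 → ∀ x : ℝ, 0 < x →
      (∀ n : ℕ, (Pr {ω | ∀ j ∈ Finset.Icc 1 n, (n : ℝ) * t < (j : ℝ) → X n j ω ≤ x}).toReal
        = ∏ j ∈ (Finset.Icc 1 n).filter (fun j : ℕ => (n : ℝ) * t < (j : ℝ)),
            (P n j (Set.Ioc 0 x)).toReal) ∧
      Tendsto (fun n : ℕ => ∏ j ∈ (Finset.Icc 1 n).filter (fun j : ℕ => (n : ℝ) * t < (j : ℝ)),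
          (P n j (Set.Ioc 0 x)).toReal)
        atTop (nhds (Real.exp (-((μ (Set.Ioc t 1)).toReal * (γ (Set.Ici x)).toReal)))) :=
  ladder_converges_in_fdd_general Ω Pr X hXmeas hindep P hPdist hPprob hPpos hPna c d hc hd hmax μ
    hμsupp hweak γ hunif
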